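/- For d ≥ 3, the operator S_d maps H¹([0,1]) boundedly into H¹([0,1]) with operator norm at most (2 + c_d/2)^{1/2}. -/

import Mathlib

open MeasureTheory Real Set

noncomputable def c (d : ℕ) : ℝ :=
  2 * Real.Gamma ((d : ℝ) / 2) / (Real.sqrt π * Real.Gamma (((d : ℝ) - 1) / 2))

noncomputable def rho (d : ℕ) (t : ℝ) : ℝ :=
  c d * (1 - t ^ 2) ^ (((d : ℝ) - 3) / 2)

noncomputable def S (d : ℕ) (f : ℝ → ℝ) (s : ℝ) : ℝ :=
  ∫ t in (0:ℝ)..1, f (t * s) * rho d t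

/-!
`ϱ_d` is a probability density on `[0, 1]` (its integral is a Beta integral) bounded by `c_d`.
Hence `S f (s) - f (s) = ∫ (f(ts) - f(s)) ϱ(t) dt`, and `|f(ts) - f(s)|² ≤ ‖f'‖²` by the fundamental
theorem of calculus and Cauchy–Schwarz, so `‖S f‖² ≤ 2‖f‖² + 2‖f'‖²`. Differentiating under the
integral, `(S f)'(s) = ∫ t ϱ(t) f'(ts) dt`; Cauchy–Schwarz for the weight `t ϱ(t)`, Fubini and the
substitution `x = ts` give `‖(S f)'‖² ≤ (∫ t ϱ) ∫ ϱ(t) ∫₀ᵗ f'² ≤ (c_d / 2) ‖f'‖²`.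
-/

theorem sq_integral_mul_le_integral_mul_integral_mul_sq {α : Type*} [MeasurableSpace α]
    {μ : Measure α} {w φ : α → ℝ} (hw : 0 ≤ᵐ[μ] w) (hw_int : Integrable w μ)
    (hwφ : Integrable (fun x ↦ w x * φ x) μ) (hwφ2 : Integrable (fun x ↦ w x * φ x ^ 2) μ) :
    (∫ x, w x * φ x ∂μ) ^ 2 ≤ (∫ x, w x ∂μ) * ∫ x, w x * φ x ^ 2 ∂μ := by
  -- `y ↦ ∫ w (y - φ)²` is a nonnegative quadratic, so its discriminant is nonpositive
  have hquad : ∀ y : ℝ, 0 ≤ (∫ x, w x ∂μ) * (y * y) + (-2 * ∫ x, w x * φ x ∂μ) * y +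
      ∫ x, w x * φ x ^ 2 ∂μ := by
    intro y
    calc (0:ℝ) ≤ ∫ x, (w x * (y * y) + w x * φ x * (-2 * y)) + w x * φ x ^ 2 ∂μ := by
          refine integral_nonneg_of_ae (hw.mono fun x hx ↦ ?_)
          have : 0 ≤ w x * (y - φ x) ^ 2 := mul_nonneg hx (sq_nonneg _)
          simp only [Pi.zero_apply]
          linarith
      _ = _ := by
          rw [integral_add (f := fun x ↦ w x * (y * y) + w x * φ x * (-2 * y))
            ((hw_int.mul_const _).add (hwφ.mul_const _)) hwφ2,
            integral_add (hw_int.mul_const _) (hwφ.mul_const _), integral_mul_const,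
            integral_mul_const]
          ring
  have := discrim_le_zero hquad
  rw [discrim] at this
  linarith

theorem sq_sub_le_mul_integral_sq_deriv {f f' : ℝ → ℝ} {u v : ℝ} (huv : u ≤ v)
    (hf : ContinuousOn f (Icc u v)) (hff' : ∀ x ∈ Ioo u v, HasDerivAt f (f' x) x)
    (hf' : ContinuousOn f' (Icc u v)) :
    (f v - f u) ^ 2 ≤ (v - u) * ∫ x in u..v, f' x ^ 2 := by
  have hint : IntegrableOn f' (Ioc u v) :=
    (hf'.integrableOn_compact isCompact_Icc).mono_set Ioc_subset_Icc_self
  have hint2 : IntegrableOn (fun x ↦ f' x ^ 2) (Ioc u v) :=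
    ((hf'.pow 2).integrableOn_compact isCompact_Icc).mono_set Ioc_subset_Icc_self
  rw [← intervalIntegral.integral_eq_sub_of_hasDerivAt_of_le huv hf hff'
    ((intervalIntegrable_iff_integrableOn_Ioc_of_le huv).2 hint),
    intervalIntegral.integral_of_le huv, intervalIntegral.integral_of_le huv]
  have := sq_integral_mul_le_integral_mul_integral_mul_sq (μ := volume.restrict (Ioc u v))
    (w := fun _ ↦ 1) (φ := f') (ae_of_all _ fun _ ↦ zero_le_one) (integrable_const 1)
    (by simpa [IntegrableOn] using hint) (by simpa [IntegrableOn] using hint2)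
  simpa [huv] using this

theorem integral_rpow_mul_one_sub_rpow {p q : ℝ} (hp : 0 < p) (hq : 0 < q) :
    ∫ x in (0:ℝ)..1, x ^ (p - 1) * (1 - x) ^ (q - 1) = Gamma p * Gamma q / Gamma (p + q) := by
  have hbeta : Complex.betaIntegral p q =
      ((∫ x in (0:ℝ)..1, x ^ (p - 1) * (1 - x) ^ (q - 1) : ℝ) : ℂ) := by
    rw [Complex.betaIntegral, ← intervalIntegral.integral_ofReal]
    refine intervalIntegral.integral_congr fun x hx ↦ ?_
    rw [uIcc_of_le zero_le_one] at hx
    push_cast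
    rw [Complex.ofReal_cpow hx.1, Complex.ofReal_cpow (sub_nonneg.2 hx.2)]
    push_cast
    ring
  have := Complex.betaIntegral_eq_Gamma_mul_div p q (by simpa using hp) (by simpa using hq)
  rw [hbeta, ← Complex.ofReal_add, Complex.Gamma_ofReal, Complex.Gamma_ofReal,
    Complex.Gamma_ofReal] at this
  exact_mod_cast this

theorem integral_one_sub_sq_rpow {a : ℝ} (ha : -1 < a) :
    ∫ t in (0:ℝ)..1, (1 - t ^ 2) ^ a = √π * Gamma (a + 1) / (2 * Gamma (a + 3 / 2)) := by
  -- the substitution `u = t²` turns the integral into `B(1/2, a + 1) / 2`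
  have hsubst := intervalIntegral.integral_comp_mul_deriv_of_deriv_nonneg (a := 0) (b := 1)
    (f := fun t ↦ t ^ 2) (f' := fun t ↦ 2 * t)
    (g := fun u ↦ u ^ ((1 / 2 : ℝ) - 1) * (1 - u) ^ ((a + 1) - 1))
    (continuous_pow 2).continuousOn (fun x _ ↦ by simpa using hasDerivAt_pow 2 x)
    (fun x hx ↦ by simp at hx; linarith [hx.1])
  rw [zero_pow two_ne_zero, one_pow, integral_rpow_mul_one_sub_rpow (by norm_num) (by linarith),
    Gamma_one_half_eq, show 1 / 2 + (a + 1) = a + 3 / 2 by ring] at hsubst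
  have hlhs : ∫ x in (0:ℝ)..1, ((fun u ↦ u ^ ((1 / 2 : ℝ) - 1) * (1 - u) ^ ((a + 1) - 1)) ∘
      fun t ↦ t ^ 2) x * (2 * x) = 2 * ∫ t in (0:ℝ)..1, (1 - t ^ 2) ^ a := by
    rw [← intervalIntegral.integral_const_mul]
    refine intervalIntegral.integral_congr_ae (ae_of_all _ fun x hx ↦ ?_)
    rw [uIoc_of_le zero_le_one] at hx
    have hsqrt : (x ^ 2) ^ ((1 / 2 : ℝ) - 1) = x⁻¹ := by
      rw [← rpow_natCast, ← rpow_mul hx.1.le]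
      norm_num [rpow_neg_one]
    simp only [Function.comp, hsqrt, add_sub_cancel_right]
    field_simp [hx.1.ne']
  rw [hlhs] at hsubst
  rw [eq_div_iff (Gamma_pos_of_pos (by linarith)).ne'] at hsubst
  rw [eq_div_iff (mul_ne_zero two_ne_zero (Gamma_pos_of_pos (by linarith)).ne'), ← hsubst]
  ring

section Weight

variable {d : ℕ}

theorem c_pos (hd : 2 ≤ d) : 0 < c d := by
  have hd' : (2:ℝ) ≤ d := by exact_mod_cast hd
  unfold c
  have := Gamma_pos_of_pos (by linarith : (0:ℝ) < d / 2)
  have := Gamma_pos_of_pos (by linarith : (0:ℝ) < (d - 1) / 2)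
  positivity

theorem integral_rho (hd : 2 ≤ d) : ∫ t in (0:ℝ)..1, rho d t = 1 := by
  have hd' : (2:ℝ) ≤ d := by exact_mod_cast hd
  have hΓ₁ := Gamma_pos_of_pos (by linarith : (0:ℝ) < d / 2)
  have hΓ₂ := Gamma_pos_of_pos (by linarith : (0:ℝ) < (d - 1) / 2)
  rw [show rho d = fun t ↦ c d * (1 - t ^ 2) ^ (((d : ℝ) - 3) / 2) from rfl,
    intervalIntegral.integral_const_mul, integral_one_sub_sq_rpow (by linarith), c,
    show ((d:ℝ) - 3) / 2 + 1 = (d - 1) / 2 by ring, show ((d:ℝ) - 3) / 2 + 3 / 2 = d / 2 by ring]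
  field_simp

theorem continuous_rho (hd : 3 ≤ d) : Continuous (rho d) := by
  have hd' : (3:ℝ) ≤ d := by exact_mod_cast hd
  exact continuous_const.mul ((continuous_const.sub (continuous_pow 2)).rpow_const
    fun _ ↦ Or.inr (by linarith))

theorem rho_nonneg (hd : 2 ≤ d) {t : ℝ} (ht : t ∈ Icc (0:ℝ) 1) : 0 ≤ rho d t :=
  mul_nonneg (c_pos hd).le (rpow_nonneg (by nlinarith [ht.1, ht.2]) _)

theorem rho_le_c (hd : 3 ≤ d) {t : ℝ} (ht : t ∈ Icc (0:ℝ) 1) : rho d t ≤ c d := by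
  have hd' : (3:ℝ) ≤ d := by exact_mod_cast hd
  refine mul_le_of_le_one_right (c_pos (by omega)).le (rpow_le_one ?_ ?_ (by linarith))
  · nlinarith [ht.1, ht.2]
  · nlinarith [ht.1]

theorem integral_mul_rho_le (hd : 3 ≤ d) : ∫ t in Ioc (0:ℝ) 1, t * rho d t ≤ c d / 2 := by
  calc ∫ t in Ioc (0:ℝ) 1, t * rho d t ≤ ∫ t in Ioc (0:ℝ) 1, t * c d := by
        refine setIntegral_mono_on ?_ ?_ measurableSet_Ioc fun t ht ↦
          mul_le_mul_of_nonneg_left (rho_le_c hd (Ioc_subset_Icc_self ht)) ht.1.le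
        · exact (continuous_id.mul (continuous_rho hd)).integrableOn_Ioc
        · exact (continuous_id.mul continuous_const).integrableOn_Ioc
    _ = c d / 2 := by
        rw [integral_mul_const, ← intervalIntegral.integral_of_le zero_le_one, integral_id]
        ring

end Weight

noncomputable def dilationAverage (w f : ℝ → ℝ) (s : ℝ) : ℝ :=
  ∫ t in (0:ℝ)..1, f (t * s) * w t

section DilationAverage

variable {w f f' h : ℝ → ℝ}

theorem ContinuousOn.comp_mul_right_Icc (hf : ContinuousOn f (Icc 0 1)) {s : ℝ}
    (hs : s ∈ Icc (0:ℝ) 1) : ContinuousOn (fun t ↦ f (t * s)) (Icc 0 1) :=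
  hf.comp (continuousOn_id.mul continuousOn_const) fun _ ht ↦ unitInterval.mul_mem ht hs

theorem abs_dilationAverage_sub_le (hw : ContinuousOn w (Icc 0 1))
    (hw0 : ∀ t ∈ Icc (0:ℝ) 1, 0 ≤ w t) (hw1 : ∫ t in (0:ℝ)..1, w t = 1)
    (hf : ContinuousOn f (Icc 0 1)) (hf' : ContinuousOn f' (Icc 0 1))
    (hff' : ∀ x ∈ Ioo 0 1, HasDerivAt f (f' x) x) {s : ℝ} (hs : s ∈ Icc (0:ℝ) 1) :
    |dilationAverage w f s - f s| ≤ √(∫ x in (0:ℝ)..1, f' x ^ 2) := by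
  set B := ∫ x in (0:ℝ)..1, f' x ^ 2
  have hincr : ∀ t ∈ Icc (0:ℝ) 1, |f (t * s) - f s| ≤ √B := by
    intro t ht
    have hts : t * s ∈ Icc (0:ℝ) 1 := unitInterval.mul_mem ht hs
    have hle : t * s ≤ s := mul_le_of_le_one_left hs.1 ht.2
    have hsub : Icc (t * s) s ⊆ Icc 0 1 := Icc_subset_Icc hts.1 hs.2
    have hsq := sq_sub_le_mul_integral_sq_deriv hle (hf.mono hsub)
      (fun x hx ↦ hff' x (Ioo_subset_Ioo hts.1 hs.2 hx)) (hf'.mono hsub)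
    have hmono : ∫ x in (t * s)..s, f' x ^ 2 ≤ B :=
      intervalIntegral.integral_mono_interval hts.1 hle hs.2
        (ae_of_all _ fun x ↦ sq_nonneg (f' x)) ((hf'.pow 2).intervalIntegrable_of_Icc zero_le_one)
    have hnonneg : 0 ≤ ∫ x in (t * s)..s, f' x ^ 2 :=
      intervalIntegral.integral_nonneg hle fun x _ ↦ sq_nonneg (f' x)
    rw [abs_sub_comm]
    refine abs_le_sqrt (hsq.trans ?_)
    calc (s - t * s) * ∫ x in (t * s)..s, f' x ^ 2 ≤ 1 * ∫ x in (t * s)..s, f' x ^ 2 :=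
          mul_le_mul_of_nonneg_right (by linarith [hts.1, hs.2]) hnonneg
      _ ≤ B := by rwa [one_mul]
  have hint : IntervalIntegrable (fun t ↦ f (t * s) * w t) volume 0 1 :=
    ((hf.comp_mul_right_Icc hs).mul hw).intervalIntegrable_of_Icc zero_le_one
  have hdiff : dilationAverage w f s - f s = ∫ t in (0:ℝ)..1, (f (t * s) - f s) * w t := by
    simp only [sub_mul]
    rw [intervalIntegral.integral_sub hint ((hw.intervalIntegrable_of_Icc zero_le_one).const_mul _),
      intervalIntegral.integral_const_mul, hw1, mul_one, dilationAverage]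
  calc |dilationAverage w f s - f s| = ‖∫ t in (0:ℝ)..1, (f (t * s) - f s) * w t‖ := by
        rw [hdiff, Real.norm_eq_abs]
    _ ≤ ∫ t in (0:ℝ)..1, √B * w t := by
        refine intervalIntegral.norm_integral_le_of_norm_le zero_le_one (ae_of_all _ fun t ht ↦ ?_)
          ((hw.intervalIntegrable_of_Icc zero_le_one).const_mul _)
        have ht' : t ∈ Icc (0:ℝ) 1 := Ioc_subset_Icc_self ht
        rw [norm_mul, Real.norm_eq_abs, Real.norm_of_nonneg (hw0 t ht')]
        exact mul_le_mul_of_nonneg_right (hincr t ht') (hw0 t ht')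
    _ = √B := by rw [intervalIntegral.integral_const_mul, hw1, mul_one]

theorem integral_sq_dilationAverage_le (hw : ContinuousOn w (Icc 0 1))
    (hw0 : ∀ t ∈ Icc (0:ℝ) 1, 0 ≤ w t) (hw1 : ∫ t in (0:ℝ)..1, w t = 1)
    (hf : ContinuousOn f (Icc 0 1)) (hf' : ContinuousOn f' (Icc 0 1))
    (hff' : ∀ x ∈ Ioo 0 1, HasDerivAt f (f' x) x) :
    ∫ s in Ioc (0:ℝ) 1, dilationAverage w f s ^ 2 ≤
      2 * (∫ s in Ioc (0:ℝ) 1, f s ^ 2) + 2 * ∫ x in Ioc (0:ℝ) 1, f' x ^ 2 := by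
  rw [← intervalIntegral.integral_of_le zero_le_one (f := fun x ↦ f' x ^ 2)]
  set B := ∫ x in (0:ℝ)..1, f' x ^ 2
  have hB : 0 ≤ B := intervalIntegral.integral_nonneg zero_le_one fun x _ ↦ sq_nonneg (f' x)
  have hpt : ∀ s ∈ Ioc (0:ℝ) 1, dilationAverage w f s ^ 2 ≤ 2 * f s ^ 2 + 2 * B := by
    intro s hs
    have habs : |dilationAverage w f s - f s| ≤ √B :=
      abs_dilationAverage_sub_le hw hw0 hw1 hf hf' hff' (Ioc_subset_Icc_self hs)
    have hsq : (dilationAverage w f s - f s) ^ 2 ≤ B := by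
      simpa only [sq_abs, sq_sqrt hB] using pow_le_pow_left₀ (abs_nonneg _) habs 2
    nlinarith [sq_nonneg (dilationAverage w f s - 2 * f s)]
  have hf2 : IntegrableOn (fun s ↦ f s ^ 2) (Ioc 0 1) :=
    ((hf.pow 2).integrableOn_compact isCompact_Icc).mono_set Ioc_subset_Icc_self
  calc ∫ s in Ioc (0:ℝ) 1, dilationAverage w f s ^ 2
      ≤ ∫ s in Ioc (0:ℝ) 1, (2 * f s ^ 2 + 2 * B) :=
        integral_mono_of_nonneg (ae_of_all _ fun s ↦ sq_nonneg _)
          ((hf2.const_mul 2).add (integrable_const _))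
          (ae_restrict_of_forall_mem measurableSet_Ioc hpt)
    _ = 2 * (∫ s in Ioc (0:ℝ) 1, f s ^ 2) + 2 * B := by
        rw [integral_add (hf2.const_mul 2) (integrable_const _), integral_const_mul,
          setIntegral_const]
        simp

theorem hasDerivAt_dilationAverage (hw : ContinuousOn w (Icc 0 1))
    (hf : ContinuousOn f (Icc 0 1)) (hf' : ContinuousOn f' (Icc 0 1))
    (hff' : ∀ x ∈ Ioo 0 1, HasDerivAt f (f' x) x) {s : ℝ} (hs : s ∈ Ioo (0:ℝ) 1) :
    HasDerivAt (dilationAverage w f) (∫ t in (0:ℝ)..1, t * w t * f' (t * s)) s := by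
  obtain ⟨M, hM⟩ := isCompact_Icc.exists_bound_of_continuousOn hf'
  obtain ⟨W, hW⟩ := isCompact_Icc.exists_bound_of_continuousOn hw
  have hmem : ∀ t ∈ Ioc (0:ℝ) 1, ∀ x ∈ Ioo (0:ℝ) 1, t * x ∈ Ioo (0:ℝ) 1 := fun t ht x hx ↦
    ⟨mul_pos ht.1 hx.1, (mul_le_of_le_one_left hx.1.le ht.2).trans_lt hx.2⟩
  have hcont : ∀ x ∈ Icc (0:ℝ) 1, ContinuousOn (fun t ↦ f (t * x) * w t) (Icc 0 1) :=
    fun x hx ↦ (hf.comp_mul_right_Icc hx).mul hw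
  refine (intervalIntegral.hasDerivAt_integral_of_dominated_loc_of_deriv_le (μ := volume)
    (F := fun x t ↦ f (t * x) * w t) (F' := fun x t ↦ t * w t * f' (t * x))
    (bound := fun _ ↦ M * W) (Ioo_mem_nhds hs.1 hs.2) ?_ ?_ ?_ ?_ intervalIntegrable_const ?_).2
  · filter_upwards [Ioo_mem_nhds hs.1 hs.2] with x hx
    rw [uIoc_of_le zero_le_one]
    exact ((hcont x (Ioo_subset_Icc_self hx)).mono Ioc_subset_Icc_self).aestronglyMeasurable
      measurableSet_Ioc
  · exact (hcont s (Ioo_subset_Icc_self hs)).intervalIntegrable_of_Icc zero_le_one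
  · rw [uIoc_of_le zero_le_one]
    refine ContinuousOn.aestronglyMeasurable ?_ measurableSet_Ioc
    exact ((continuousOn_id.mul hw).mul
      (hf'.comp_mul_right_Icc (Ioo_subset_Icc_self hs))).mono Ioc_subset_Icc_self
  · refine ae_of_all _ fun t ht x hx ↦ ?_
    rw [uIoc_of_le zero_le_one] at ht
    have ht' : t ∈ Icc (0:ℝ) 1 := Ioc_subset_Icc_self ht
    rw [norm_mul, norm_mul, Real.norm_of_nonneg ht.1.le]
    have hW' := hW t ht'
    calc t * ‖w t‖ * ‖f' (t * x)‖ ≤ 1 * W * M := by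
          gcongr
          · linarith [norm_nonneg (w t)]
          · exact ht.2
          · exact hM _ (Ioo_subset_Icc_self (hmem t ht x hx))
      _ = M * W := by ring
  · refine ae_of_all _ fun t ht x hx ↦ ?_
    rw [uIoc_of_le zero_le_one] at ht
    exact (((hff' _ (hmem t ht x hx)).comp x ((hasDerivAt_id x).const_mul t)).mul_const
      (w t)).congr_deriv (by ring)

theorem sq_deriv_dilationAverage_le (hw : ContinuousOn w (Icc 0 1))
    (hw0 : ∀ t ∈ Icc (0:ℝ) 1, 0 ≤ w t) (hf : ContinuousOn f (Icc 0 1))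
    (hf' : ContinuousOn f' (Icc 0 1)) (hff' : ∀ x ∈ Ioo 0 1, HasDerivAt f (f' x) x)
    {s : ℝ} (hs : s ∈ Ioo (0:ℝ) 1) :
    deriv (dilationAverage w f) s ^ 2 ≤
      (∫ t in Ioc (0:ℝ) 1, t * w t) * ∫ t in Ioc (0:ℝ) 1, t * w t * f' (t * s) ^ 2 := by
  rw [(hasDerivAt_dilationAverage hw hf hf' hff' hs).deriv,
    intervalIntegral.integral_of_le zero_le_one]
  have hg := hf'.comp_mul_right_Icc (Ioo_subset_Icc_self hs)
  have hint : ∀ {g : ℝ → ℝ}, ContinuousOn g (Icc 0 1) → IntegrableOn g (Ioc 0 1) :=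
    fun hg ↦ (hg.integrableOn_compact isCompact_Icc).mono_set Ioc_subset_Icc_self
  exact sq_integral_mul_le_integral_mul_integral_mul_sq
    (ae_restrict_of_forall_mem measurableSet_Ioc fun t ht ↦
      mul_nonneg ht.1.le (hw0 t (Ioc_subset_Icc_self ht)))
    (hint (continuousOn_id.mul hw)) (hint ((continuousOn_id.mul hw).mul hg))
    (hint ((continuousOn_id.mul hw).mul (hg.pow 2)))

theorem integrable_mul_comp_mul (hw : ContinuousOn w (Icc 0 1))
    (hh : ContinuousOn h (Icc 0 1)) :
    Integrable (Function.uncurry fun s t ↦ t * w t * h (t * s))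
      ((volume.restrict (Ioc (0:ℝ) 1)).prod (volume.restrict (Ioc (0:ℝ) 1))) := by
  rw [Measure.prod_restrict, ← Measure.volume_eq_prod]
  have hcont : ContinuousOn (Function.uncurry fun s t ↦ t * w t * h (t * s))
      (Icc (0:ℝ) 1 ×ˢ Icc (0:ℝ) 1) :=
    (continuousOn_snd.mul (hw.comp continuousOn_snd fun p hp ↦ hp.2)).mul
      (hh.comp (continuousOn_snd.mul continuousOn_fst) fun p hp ↦ unitInterval.mul_mem hp.2 hp.1)
  exact (hcont.integrableOn_compact (isCompact_Icc.prod isCompact_Icc)).mono_set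
    (prod_mono Ioc_subset_Icc_self Ioc_subset_Icc_self)

theorem integral_integral_mul_comp_mul (hw : ContinuousOn w (Icc 0 1))
    (hh : ContinuousOn h (Icc 0 1)) :
    ∫ s in Ioc (0:ℝ) 1, ∫ t in Ioc (0:ℝ) 1, t * w t * h (t * s) =
      ∫ t in Ioc (0:ℝ) 1, w t * ∫ x in (0:ℝ)..t, h x := by
  rw [integral_integral_swap (integrable_mul_comp_mul hw hh)]
  refine setIntegral_congr_fun measurableSet_Ioc fun t _ ↦ ?_
  rw [← intervalIntegral.integral_of_le zero_le_one, intervalIntegral.integral_const_mul,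
    mul_comm t, mul_assoc, ← smul_eq_mul t, intervalIntegral.smul_integral_comp_mul_left, mul_zero,
    mul_one]

theorem integral_sq_deriv_dilationAverage_le (hw : ContinuousOn w (Icc 0 1))
    (hw0 : ∀ t ∈ Icc (0:ℝ) 1, 0 ≤ w t) (hf : ContinuousOn f (Icc 0 1))
    (hf' : ContinuousOn f' (Icc 0 1)) (hff' : ∀ x ∈ Ioo 0 1, HasDerivAt f (f' x) x) :
    ∫ s in Ioc (0:ℝ) 1, deriv (dilationAverage w f) s ^ 2 ≤
      (∫ t in Ioc (0:ℝ) 1, t * w t) * (∫ t in Ioc (0:ℝ) 1, w t) *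
        ∫ x in Ioc (0:ℝ) 1, f' x ^ 2 := by
  set P := ∫ t in Ioc (0:ℝ) 1, t * w t
  set B := ∫ x in Ioc (0:ℝ) 1, f' x ^ 2
  have hP : 0 ≤ P := setIntegral_nonneg measurableSet_Ioc fun t ht ↦
    mul_nonneg ht.1.le (hw0 t (Ioc_subset_Icc_self ht))
  have hinner : ∀ t ∈ Ioc (0:ℝ) 1, ∫ x in (0:ℝ)..t, f' x ^ 2 ≤ B := fun t ht ↦ by
    rw [intervalIntegral.integral_of_le ht.1.le]
    exact setIntegral_mono_set (((hf'.pow 2).integrableOn_compact isCompact_Icc).mono_set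
      Ioc_subset_Icc_self) (ae_of_all _ fun x ↦ sq_nonneg (f' x))
      (Ioc_subset_Ioc_right ht.2).eventuallyLE
  calc ∫ s in Ioc (0:ℝ) 1, deriv (dilationAverage w f) s ^ 2
      ≤ ∫ s in Ioc (0:ℝ) 1, P * ∫ t in Ioc (0:ℝ) 1, t * w t * f' (t * s) ^ 2 := by
        rw [integral_Ioc_eq_integral_Ioo, integral_Ioc_eq_integral_Ioo]
        refine integral_mono_of_nonneg (ae_of_all _ fun s ↦ sq_nonneg _) ?_
          (ae_restrict_of_forall_mem measurableSet_Ioo fun s hs ↦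
            sq_deriv_dilationAverage_le hw hw0 hf hf' hff' hs)
        exact (((integrable_mul_comp_mul hw (h := fun x ↦ f' x ^ 2) (hf'.pow 2)).integral_prod_left
          ).const_mul P).mono_measure (Measure.restrict_mono Ioo_subset_Ioc_self le_rfl)
    _ = P * ∫ t in Ioc (0:ℝ) 1, w t * ∫ x in (0:ℝ)..t, f' x ^ 2 := by
        rw [integral_const_mul,
          integral_integral_mul_comp_mul hw (h := fun x ↦ f' x ^ 2) (hf'.pow 2)]
    _ ≤ P * ∫ t in Ioc (0:ℝ) 1, w t * B := by
        refine mul_le_mul_of_nonneg_left (integral_mono_of_nonneg ?_ ?_ ?_) hP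
        · refine ae_restrict_of_forall_mem measurableSet_Ioc fun t ht ↦ ?_
          exact mul_nonneg (hw0 t (Ioc_subset_Icc_self ht))
            (intervalIntegral.integral_nonneg ht.1.le fun x _ ↦ sq_nonneg (f' x))
        · exact ((hw.integrableOn_compact isCompact_Icc).mono_set Ioc_subset_Icc_self).mul_const B
        · exact ae_restrict_of_forall_mem measurableSet_Ioc fun t ht ↦
            mul_le_mul_of_nonneg_left (hinner t ht) (hw0 t (Ioc_subset_Icc_self ht))
    _ = P * (∫ t in Ioc (0:ℝ) 1, w t) * B := by rw [integral_mul_const, mul_assoc]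

end DilationAverage

theorem ContDiffOn.hasDerivAt_derivWithin {f : ℝ → ℝ} {a b x : ℝ}
    (hf : ContDiffOn ℝ 1 f (Icc a b)) (hx : x ∈ Ioo a b) :
    HasDerivAt f (derivWithin f (Icc a b) x) x := by
  have hnhds : Icc a b ∈ nhds x := Icc_mem_nhds hx.1 hx.2
  rw [derivWithin_of_mem_nhds hnhds]
  exact ((hf.differentiableOn one_ne_zero x (Ioo_subset_Icc_self hx)).differentiableAt
    hnhds).hasDerivAt

theorem S_bounded_H1 (d : ℕ) (hd : 3 ≤ d) (f : ℝ → ℝ)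
    (hf : ContDiffOn ℝ 1 f (Set.Icc (0:ℝ) 1)) :
    (∫ s in Set.Ioc (0:ℝ) 1, (S d f s) ^ 2) +
        (∫ s in Set.Ioc (0:ℝ) 1, (deriv (S d f) s) ^ 2) ≤
      (2 + c d / 2) *
        ((∫ t in Set.Ioc (0:ℝ) 1, (f t) ^ 2) +
          (∫ t in Set.Ioc (0:ℝ) 1, (deriv f t) ^ 2)) := by
  set f' := derivWithin f (Icc 0 1)
  have hf' : ContinuousOn f' (Icc 0 1) :=
    hf.continuousOn_derivWithin (uniqueDiffOn_Icc one_pos) le_rfl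
  have hff' : ∀ x ∈ Ioo (0:ℝ) 1, HasDerivAt f (f' x) x := fun x hx ↦ hf.hasDerivAt_derivWithin hx
  have hB : ∫ x in Ioc (0:ℝ) 1, f' x ^ 2 = ∫ x in Ioc (0:ℝ) 1, deriv f x ^ 2 := by
    rw [integral_Ioc_eq_integral_Ioo, integral_Ioc_eq_integral_Ioo]
    exact setIntegral_congr_fun measurableSet_Ioo fun x hx ↦ by rw [(hff' x hx).deriv]
  have hρ : ContinuousOn (rho d) (Icc 0 1) := (continuous_rho hd).continuousOn
  have hρ0 : ∀ t ∈ Icc (0:ℝ) 1, 0 ≤ rho d t := fun t ht ↦ rho_nonneg (by omega) ht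
  have hρ1 := integral_rho (by omega : 2 ≤ d)
  have hvalue := integral_sq_dilationAverage_le hρ hρ0 hρ1 hf.continuousOn hf' hff'
  have hslope := integral_sq_deriv_dilationAverage_le hρ hρ0 hf.continuousOn hf' hff'
  rw [← intervalIntegral.integral_of_le zero_le_one (f := rho d), hρ1, mul_one] at hslope
  rw [hB] at hvalue hslope
  have hB0 : 0 ≤ ∫ t in Ioc (0:ℝ) 1, deriv f t ^ 2 :=
    setIntegral_nonneg measurableSet_Ioc fun t _ ↦ sq_nonneg _
  have hA0 : 0 ≤ ∫ t in Ioc (0:ℝ) 1, f t ^ 2 :=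
    setIntegral_nonneg measurableSet_Ioc fun t _ ↦ sq_nonneg _
  change (∫ s in Ioc (0:ℝ) 1, dilationAverage (rho d) f s ^ 2) +
    (∫ s in Ioc (0:ℝ) 1, deriv (dilationAverage (rho d) f) s ^ 2) ≤ _
  nlinarith [mul_le_mul_of_nonneg_right (integral_mul_rho_le hd) hB0, c_pos (by omega : 2 ≤ d)]
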